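/- Let V(x, θ) = (Kτ₁/2)(x − ω/K)² + (1 − cos 2θ)/2 with K, τ₁ > 0. For the system ẋ = (1/τ₁)sin(2θ), θ̇ = ω − K(x + (τ₂/τ₁)sin(2θ)) with τ₂ > 0, if a global solution satisfies V(x(t), θ(t)) = V(x(0), θ(0)) for all t ≥ 0, then the solution is an equilibrium. -/

import Mathlib

/-!
Along a solution the Lyapunov function decreases at rate `(K τ₂ / τ₁) sin² (2θ)`, so if it is
constant on `[0, ∞)` then `sin (2θ) = 0` there. Differentiating `sin (2θ) ≡ 0` once more, and using
`cos (2θ) = ±1`, gives `θ̇ = 0`; the phase equation then reads `ω - K x = 0`, and `θ` is constant.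
-/

open Real Set

noncomputable def costasLyapunov (K τ₁ ω x θ : ℝ) : ℝ :=
  K * τ₁ / 2 * (x - ω / K) ^ 2 + (1 - cos (2 * θ)) / 2

-- At the endpoint `a` this uses uniqueness of one-sided derivatives.
theorem HasDerivAt.eq_zero_of_forall_Ici_eq {f : ℝ → ℝ} {f' a t : ℝ} (hf : HasDerivAt f f' t)
    (hconst : ∀ s, a ≤ s → f s = f a) (ht : a ≤ t) : f' = 0 := by
  have hzero : HasDerivWithinAt f 0 (Ici a) t :=
    (hasDerivWithinAt_const t (Ici a) (f a)).congr (fun s hs => hconst s hs) (hconst t ht)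
  exact (uniqueDiffOn_Ici a t ht).eq_deriv _ hf.hasDerivWithinAt hzero

theorem HasDerivAt.eq_zero_of_forall_Ici_sin_two_mul_eq_zero {θ : ℝ → ℝ} {θ' a t : ℝ}
    (hθ : HasDerivAt θ θ' t) (hsin : ∀ s, a ≤ s → Real.sin (2 * θ s) = 0) (ht : a ≤ t) :
    θ' = 0 := by
  have hderiv : Real.cos (2 * θ t) * (2 * θ') = 0 :=
    ((hθ.const_mul 2).sin).eq_zero_of_forall_Ici_eq
      (fun s hs => (hsin s hs).trans (hsin a le_rfl).symm) ht
  have hcos : Real.cos (2 * θ t) ≠ 0 := by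
    rcases sin_eq_zero_iff_cos_eq.mp (hsin t ht) with h | h <;> simp [h]
  simpa [hcos] using hderiv

section Costas

variable {τ₁ τ₂ K ω : ℝ} {x θ : ℝ → ℝ}

theorem hasDerivAt_costasLyapunov (hτ₁ : τ₁ ≠ 0) (hK : K ≠ 0)
    (hx : ∀ t, HasDerivAt x ((1/τ₁) * sin (2 * θ t)) t)
    (hθ : ∀ t, HasDerivAt θ (ω - K * (x t + (τ₂/τ₁) * sin (2 * θ t))) t) (t : ℝ) :
    HasDerivAt (fun t => costasLyapunov K τ₁ ω (x t) (θ t))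
      (-(K * τ₂ / τ₁) * sin (2 * θ t) ^ 2) t := by
  have hx2 := (((hx t).sub_const (ω / K)).fun_pow 2).const_mul (K * τ₁ / 2)
  have hcos := (((hθ t).const_mul 2).cos.const_sub 1).div_const 2
  refine (hx2.add hcos).congr_deriv ?_
  simp only [Nat.cast_ofNat, Nat.add_one_sub_one, pow_one]
  field_simp
  ring

theorem sin_two_mul_eq_zero_of_costasLyapunov_const (hτ₁ : 0 < τ₁) (hτ₂ : 0 < τ₂) (hK : 0 < K)
    (hx : ∀ t, HasDerivAt x ((1/τ₁) * sin (2 * θ t)) t)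
    (hθ : ∀ t, HasDerivAt θ (ω - K * (x t + (τ₂/τ₁) * sin (2 * θ t))) t)
    (hconst : ∀ t, 0 ≤ t →
      costasLyapunov K τ₁ ω (x t) (θ t) = costasLyapunov K τ₁ ω (x 0) (θ 0))
    {t : ℝ} (ht : 0 ≤ t) : sin (2 * θ t) = 0 := by
  have hdecay :=
    (hasDerivAt_costasLyapunov hτ₁.ne' hK.ne' hx hθ t).eq_zero_of_forall_Ici_eq hconst ht
  have hrate : K * τ₂ / τ₁ ≠ 0 := by positivity
  simpa [hrate] using hdecay

end Costas

theorem costas_lasalle_invariance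
    (τ₁ τ₂ K ω : ℝ) (hτ₁ : 0 < τ₁) (hτ₂ : 0 < τ₂) (hK : 0 < K)
    (x θ : ℝ → ℝ)
    (hx : ∀ t, HasDerivAt x ((1/τ₁) * Real.sin (2 * θ t)) t)
    (hθ : ∀ t, HasDerivAt θ (ω - K * (x t + (τ₂/τ₁) * Real.sin (2 * θ t))) t)
    (V : ℝ → ℝ → ℝ)
    (hV : V = fun x θ => K * τ₁ / 2 * (x - ω/K)^2 + (1 - Real.cos (2*θ)) / 2)
    (hconst : ∀ t : ℝ, 0 ≤ t → V (x t) (θ t) = V (x 0) (θ 0)) :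
    Real.sin (2 * θ 0) = 0 ∧ ∀ t : ℝ, 0 ≤ t → x t = ω / K ∧ θ t = θ 0 := by
  subst hV
  have hsin : ∀ t, 0 ≤ t → sin (2 * θ t) = 0 := fun t ht =>
    sin_two_mul_eq_zero_of_costasLyapunov_const hτ₁ hτ₂ hK hx hθ hconst ht
  have hphase : ∀ t, 0 ≤ t → ω - K * (x t + (τ₂/τ₁) * sin (2 * θ t)) = 0 := fun t ht =>
    (hθ t).eq_zero_of_forall_Ici_sin_two_mul_eq_zero hsin ht
  have hfreq : ∀ t, 0 ≤ t → x t = ω / K := by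
    intro t ht
    have hlocked := hphase t ht
    rw [hsin t ht, mul_zero, add_zero] at hlocked
    field_simp
    linarith
  refine ⟨hsin 0 le_rfl, fun t ht => ⟨hfreq t ht, ?_⟩⟩
  have hθc : Continuous θ := continuous_iff_continuousAt.mpr fun s => (hθ s).continuousAt
  refine constant_of_has_deriv_right_zero hθc.continuousOn (fun s hs => ?_) t ⟨ht, le_rfl⟩
  simpa [hphase s hs.1] using (hθ s).hasDerivWithinAt
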